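/- arXiv:math/0202160 — 2 statements merged into one kernel-verified Lean document; each statement's English description precedes it below -/
import Mathlib

section
/- In the product H² × ℝ with the product Riemannian metric, consider points o, o₀ with o₀ ∈ H² × {0} and o ∈ H² × {0}, and let σ be a geodesic line through o₀ contained in the vertical plane w₀ × ℝ (where w₀ is a geodesic of H² through o₀ perpendicular to the segment o o₀). Let t ∈ w₀ × {0} and s ∈ σ be points with |o₀ - t| = |o₀ - s| = d. Then dist_{H²×ℝ}(o, s) ≤ dist_{H²}(o, t), with equality if and only if d = 0 or σ = w₀ × {0}. -/
/-- The inverse of `cosh` on `[1, ∞)`. -/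
noncomputable def arcosh (x : ℝ) : ℝ := Real.log (x + Real.sqrt (x ^ 2 - 1))

/-!
Write `A = cosh l` and `F x = arcosh (A cosh x)`. With `y = d cos α ≤ d` the two hypotenuses are
`√(F y ² + d² - y²)` and `F d`, so everything follows once `F x ² - x²` is strictly increasing on
`[0, ∞)`. Putting `u = F x > x`, its derivative `2 u A sinh x / sinh u - 2 x` is positive exactly
when `x tanh u < u tanh x`, i.e. because `tanh t / t` decreases. By the product-to-sum formulas this
is the monotonicity of `sinh t / t`, the slope of the convex function `sinh` on `[0, ∞)` from `0`.
-/

lemma arcosh_eq_real_arcosh : arcosh = Real.arcosh := rfl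

section

open Real hiding arcosh
open Set

lemma strictConvexOn_sinh : StrictConvexOn ℝ (Ici 0) sinh := by
  refine StrictMonoOn.strictConvexOn_of_deriv (convex_Ici 0) continuous_sinh.continuousOn ?_
  rw [Real.deriv_sinh, interior_Ici]
  exact cosh_strictMonoOn.mono Ioi_subset_Ici_self

lemma mul_sinh_lt_mul_sinh {x y : ℝ} (hx : 0 < x) (hxy : x < y) :
    y * sinh x < x * sinh y := by
  simpa using strictConvexOn_sinh.secant_strict_mono_aux1 self_mem_Ici (hx.trans hxy).le hx hxy

lemma mul_tanh_lt_mul_tanh {x u : ℝ} (hx : 0 < x) (hxu : x < u) :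
    x * tanh u < u * tanh x := by
  have hsinh := mul_sinh_lt_mul_sinh (sub_pos.2 hxu) (by linarith : u - x < u + x)
  have key : x * (sinh u * cosh x) < u * (sinh x * cosh u) := by
    rw [sinh_add, sinh_sub] at hsinh
    linarith
  rw [tanh_eq_sinh_div_cosh, tanh_eq_sinh_div_cosh, mul_div_assoc', mul_div_assoc',
    div_lt_div_iff₀ (cosh_pos u) (cosh_pos x)]
  linarith

lemma one_lt_mul_cosh {A : ℝ} (hA : 1 < A) (x : ℝ) : 1 < A * cosh x :=
  hA.trans_le (le_mul_of_one_le_right (by linarith) (one_le_cosh x))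

lemma hasDerivAt_arcosh_mul_cosh {A : ℝ} (hA : 1 < A) (x : ℝ) :
    HasDerivAt (fun x => Real.arcosh (A * cosh x))
      (A * sinh x / sinh (Real.arcosh (A * cosh x))) x := by
  have h := (hasDerivAt_arcosh (one_lt_mul_cosh hA x)).comp x ((hasDerivAt_cosh x).const_mul A)
  rwa [← sinh_arcosh (one_lt_mul_cosh hA x).le, inv_mul_eq_div] at h

lemma strictMonoOn_sq_arcosh_mul_cosh_sub_sq {A : ℝ} (hA : 1 < A) :
    StrictMonoOn (fun x => Real.arcosh (A * cosh x) ^ 2 - x ^ 2) (Ici 0) := by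
  have hderiv (x : ℝ) : HasDerivAt (fun x => Real.arcosh (A * cosh x) ^ 2 - x ^ 2)
      (2 * Real.arcosh (A * cosh x) * (A * sinh x / sinh (Real.arcosh (A * cosh x))) - 2 * x)
      x := by
    refine (((hasDerivAt_arcosh_mul_cosh hA x).pow 2).sub (hasDerivAt_pow 2 x)).congr_deriv ?_
    push_cast
    ring
  refine strictMonoOn_of_deriv_pos (convex_Ici 0)
    (HasDerivAt.continuousOn fun x _ => hderiv x) fun x hx => ?_
  rw [interior_Ici, mem_Ioi] at hx
  rw [(hderiv x).deriv, sub_pos]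
  set u := Real.arcosh (A * cosh x)
  have hcosh_u : cosh u = A * cosh x := cosh_arcosh (one_lt_mul_cosh hA x).le
  have hxu : x < u := by
    have : cosh x < cosh u := by
      rw [hcosh_u]
      exact lt_mul_of_one_lt_left (cosh_pos x) hA
    rwa [cosh_lt_cosh, abs_of_pos hx, abs_of_nonneg (arcosh_nonneg (one_lt_mul_cosh hA x).le)]
      at this
  have htanh := mul_tanh_lt_mul_tanh hx hxu
  rw [tanh_eq_sinh_div_cosh, tanh_eq_sinh_div_cosh, hcosh_u, mul_div_assoc', mul_div_assoc',
    div_lt_div_iff₀ (by positivity) (cosh_pos x)] at htanh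
  have hsinh_u : 0 < sinh u := sinh_pos_iff.2 (hx.trans hxu)
  rw [mul_div_assoc', lt_div_iff₀ hsinh_u]
  nlinarith [cosh_pos x]

lemma sqrt_sq_arcosh_mul_cosh_add_sub_sq_le {A y d : ℝ} (hA : 1 < A) (hy : 0 ≤ y) (hyd : y ≤ d) :
    √(Real.arcosh (A * cosh y) ^ 2 + (d ^ 2 - y ^ 2)) ≤ Real.arcosh (A * cosh d) ∧
      (√(Real.arcosh (A * cosh y) ^ 2 + (d ^ 2 - y ^ 2)) = Real.arcosh (A * cosh d) ↔
        y = d) := by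
  have hmono := strictMonoOn_sq_arcosh_mul_cosh_sub_sq hA
  have hd : 0 ≤ d := hy.trans hyd
  have hrhs : 0 ≤ Real.arcosh (A * cosh d) := arcosh_nonneg (one_lt_mul_cosh hA d).le
  have hlhs : 0 ≤ Real.arcosh (A * cosh y) ^ 2 + (d ^ 2 - y ^ 2) := by nlinarith
  constructor
  · rw [sqrt_le_left hrhs]
    linarith [hmono.monotoneOn hy hd hyd]
  · rw [sqrt_eq_iff_eq_sq hlhs hrhs, ← hmono.injOn.eq_iff hy hd]
    constructor <;> intro h <;> linarith

lemma mul_cos_eq_self_iff {d α : ℝ} (hα0 : 0 ≤ α) (hα : α ≤ π / 2) :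
    d * cos α = d ↔ d = 0 ∨ α = 0 := by
  rw [← sub_eq_zero, ← mul_sub_one, mul_eq_zero, sub_eq_zero,
    cos_eq_one_iff_of_lt_of_lt (by linarith [pi_pos]) (by linarith [pi_pos])]

end

/- `l = |o - o₀|` and `α` is the angle between `σ` and `w₀ × {0}`: the point `s` lies above the
point of `w₀` at distance `d cos α` from `o₀`, at height `d sin α`. Both distances then come from
the right-angle law `cosh c = cosh a cosh b` of `H²`, the one in `H² × ℝ` combined with the height
by Pythagoras. -/
theorem product_vs_hyperbolic_hypotenuse (l d α : ℝ) (hl : 0 < l) (hd : 0 ≤ d)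
    (hα0 : 0 ≤ α) (hα : α ≤ Real.pi / 2) :
    Real.sqrt ((arcosh (Real.cosh l * Real.cosh (d * Real.cos α))) ^ 2
        + (d * Real.sin α) ^ 2) ≤ arcosh (Real.cosh l * Real.cosh d) ∧
    (Real.sqrt ((arcosh (Real.cosh l * Real.cosh (d * Real.cos α))) ^ 2
        + (d * Real.sin α) ^ 2) = arcosh (Real.cosh l * Real.cosh d) ↔ d = 0 ∨ α = 0) := by
  have hcos : 0 ≤ Real.cos α := Real.cos_nonneg_of_mem_Icc ⟨by linarith [Real.pi_pos], hα⟩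
  have hvertical : (d * Real.sin α) ^ 2 = d ^ 2 - (d * Real.cos α) ^ 2 := by
    linear_combination d ^ 2 * Real.sin_sq_add_cos_sq α
  rw [arcosh_eq_real_arcosh, hvertical, ← mul_cos_eq_self_iff hα0 hα]
  exact sqrt_sq_arcosh_mul_cosh_add_sub_sq_le (Real.one_lt_cosh.2 hl.ne') (mul_nonneg hd hcos)
    (mul_le_of_le_one_right hd (Real.cos_le_one α))
end

section
/- Let o, o₀ be points in H² ⊂ H² × ℝ with l = |o - o₀| ≥ l₀ > 0, let w₀ be the geodesic of H² through o₀ perpendicular to o o₀, and let σ be a geodesic line in the vertical plane w₀ × ℝ through (o₀, 0) making angle α ≥ α₀ > 0 with w₀ × {0}. For d ≥ 1, let t ∈ w₀ with |o₀ - t| = d and s ∈ σ with distance d from o₀ along σ. Then Δ := dist_{H²}(o, t) − dist_{H²×ℝ}(o, s) ≥ δ₀ for some δ₀ > 0 depending only on l₀ and α₀ (not on l, α, d). -/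
/-!
Write `b = d cos α`, so that `(d sin α)² = d² - b²`, and let `A(x) = arcosh (cosh l cosh x)` be
the hypotenuse of the hyperbolic right triangle with legs `l` and `x`. Since `A(d) ≤ l + d`, the
estimate follows once `A(d)² - d²` exceeds `A(b)² - b²` by a fixed multiple of `l + d`.

The derivative of the excess `x ↦ A(x)² - x²` is `2 tanh x (A coth A - x coth x)`, which is at least
`2 (A - x) k(x)` with `k(x) = (sinh x cosh x - x) / (eˣ cosh x)`, and `A - x ≥ log cosh l`.
As `k ≥ 0` on `[0, ∞)` and `k ≥ 1/50` on `[1/2, ∞)` ⊇ `[(1 - μ/2) d, d]`, where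
`μ = 1 - cos α₀ ≤ 1 - cos α`, the excess grows by at least `μ d log (cosh l) / 50` from `b`
to `d`; finally `log cosh l` is comparable to `l + 1` for `l ≥ l₀`.
-/

section HyperbolicRightTriangle

open Real Set

variable {l : ℝ}

lemma sinh_le_mul_cosh {x : ℝ} (hx : 0 ≤ x) : sinh x ≤ x * cosh x := by
  have hderiv : ∀ y ∈ interior (Icc 0 x), deriv sinh y ≤ cosh x := by
    rw [interior_Icc, Real.deriv_sinh]
    rintro y ⟨hy₀, hyx⟩
    rw [cosh_le_cosh, abs_of_pos hy₀, abs_of_nonneg hx]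
    exact hyx.le
  simpa [mul_comm] using (convex_Icc 0 x).image_sub_le_mul_sub_of_deriv_le
    continuous_sinh.continuousOn differentiable_sinh.differentiableOn hderiv
    0 ⟨le_rfl, hx⟩ x ⟨hx, le_rfl⟩ hx

lemma cosh_add_log_cosh_le (x : ℝ) : cosh (x + log (cosh l)) ≤ cosh l * cosh x := by
  have hcosh : 1 ≤ cosh l := one_le_cosh l
  have hneg : exp (-(x + log (cosh l))) ≤ cosh l * exp (-x) :=
    calc exp (-(x + log (cosh l))) ≤ exp (-x) := exp_le_exp.mpr (by linarith [log_nonneg hcosh])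
      _ ≤ cosh l * exp (-x) := le_mul_of_one_le_left (exp_pos _).le hcosh
  rw [cosh_eq, cosh_eq x, exp_add, exp_log (cosh_pos l)]
  linarith

lemma add_log_cosh_le_arcosh {x : ℝ} (hx : 0 ≤ x) :
    x + log (cosh l) ≤ Real.arcosh (cosh l * cosh x) := by
  rw [← arcosh_cosh (add_nonneg hx (log_nonneg (one_le_cosh l))),
    arcosh_le_arcosh (cosh_pos _) (mul_pos (cosh_pos l) (cosh_pos x))]
  exact cosh_add_log_cosh_le x

lemma arcosh_cosh_mul_cosh_le_add {x : ℝ} (hl : 0 ≤ l) (hx : 0 ≤ x) :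
    Real.arcosh (cosh l * cosh x) ≤ l + x := by
  rw [← arcosh_cosh (add_nonneg hl hx),
    arcosh_le_arcosh (mul_pos (cosh_pos l) (cosh_pos x)) (cosh_pos _), cosh_add]
  nlinarith [sinh_nonneg_iff.mpr hl, sinh_nonneg_iff.mpr hx]

lemma one_lt_cosh_mul_cosh (hl : l ≠ 0) (x : ℝ) : 1 < cosh l * cosh x := by
  nlinarith [one_lt_cosh.mpr hl, one_le_cosh x]

lemma hasDerivAt_arcosh_cosh_mul_cosh (hl : l ≠ 0) (x : ℝ) :
    HasDerivAt (fun y ↦ Real.arcosh (cosh l * cosh y))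
      (cosh l * sinh x / sinh (Real.arcosh (cosh l * cosh x))) x := by
  have h₁ := one_lt_cosh_mul_cosh hl x
  refine ((hasDerivAt_arcosh h₁).comp x ((hasDerivAt_cosh x).const_mul (cosh l))).congr_deriv ?_
  rw [sinh_arcosh h₁.le, div_eq_inv_mul]

/-- `A² - x²` for the hypotenuse `A` of the hyperbolic right triangle with legs `l` and `x`;
in the Euclidean plane it would be the constant `l²`. -/
noncomputable def pythagoreanExcess (l x : ℝ) : ℝ := Real.arcosh (cosh l * cosh x) ^ 2 - x ^ 2

lemma hasDerivAt_pythagoreanExcess (hl : l ≠ 0) (x : ℝ) :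
    HasDerivAt (pythagoreanExcess l)
      (2 * (Real.arcosh (cosh l * cosh x) *
        (cosh l * sinh x / sinh (Real.arcosh (cosh l * cosh x)))) - 2 * x) x := by
  refine (((hasDerivAt_arcosh_cosh_mul_cosh hl x).pow 2).sub (hasDerivAt_pow 2 x)).congr_deriv ?_
  push_cast
  ring

noncomputable def excessRate (x : ℝ) : ℝ := (sinh x * cosh x - x) / (exp x * cosh x)

lemma sinh_mul_cosh_sub_self_nonneg {x : ℝ} (hx : 0 ≤ x) : 0 ≤ sinh x * cosh x - x := by
  nlinarith [self_le_sinh_iff.mpr hx, one_le_cosh x]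

lemma excessRate_nonneg {x : ℝ} (hx : 0 ≤ x) : 0 ≤ excessRate x :=
  div_nonneg (sinh_mul_cosh_sub_self_nonneg hx) (by positivity)

lemma one_div_fifty_le_excessRate {x : ℝ} (hx : 1 / 2 ≤ x) : 1 / 50 ≤ excessRate x := by
  have he : 2.7182818283 < exp 1 := exp_one_gt_d9
  have hE : exp 1 ≤ exp (2 * x) := exp_le_exp.mpr (by linarith)
  have hlin : 2 * x * exp 1 ≤ exp (2 * x) := by
    have := add_one_le_exp (2 * x - 1)
    rw [exp_sub, le_div_iff₀ (exp_pos 1)] at this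
    linarith
  have hinv : exp (-(2 * x)) * exp (2 * x) = 1 := by rw [← exp_add]; simp
  have hnum : sinh x * cosh x = (exp (2 * x) - exp (-(2 * x))) / 4 := by
    have := sinh_two_mul x
    rw [sinh_eq] at this
    linarith
  have hden : exp x * cosh x = (exp (2 * x) + 1) / 2 := by
    rw [cosh_eq, two_mul, exp_add, exp_neg]
    field_simp
  rw [excessRate, le_div_iff₀ (by positivity), hnum, hden]
  nlinarith [exp_pos (-(2 * x))]

/-- The right-hand side is `tanh x * (A coth A - x coth x)`. -/
lemma sub_mul_excessRate_le {x A : ℝ} (hx : 0 ≤ x) (hxA : x < A) :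
    (A - x) * excessRate x ≤ A * cosh A * sinh x / (sinh A * cosh x) - x := by
  obtain ⟨m, rfl⟩ : ∃ m, A = x + m := ⟨A - x, by ring⟩
  have hm : 0 ≤ m := by linarith
  have hsinh : 0 < sinh (x + m) := sinh_pos_iff.mpr (by linarith)
  have hnum : m * cosh m * (sinh x * cosh x - x) ≤
      (x + m) * cosh (x + m) * sinh x - x * cosh x * sinh (x + m) := by
    have hid : (x + m) * cosh (x + m) * sinh x - x * cosh x * sinh (x + m)
          - m * cosh m * (sinh x * cosh x - x)
        = m * sinh x ^ 2 * sinh m + x * (m * cosh m - sinh m) := by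
      rw [cosh_add, sinh_add]
      linear_combination (-(x * sinh m)) * cosh_sq x
    have : 0 ≤ m * sinh x ^ 2 * sinh m + x * (m * cosh m - sinh m) :=
      add_nonneg (by have := sinh_nonneg_iff.mpr hm; positivity)
        (mul_nonneg hx (by linarith [sinh_le_mul_cosh hm]))
    linarith
  have hden : sinh (x + m) ≤ cosh m * exp x := by
    rw [sinh_add, ← cosh_add_sinh x]
    nlinarith [sinh_lt_cosh m, cosh_pos x, sinh_nonneg_iff.mpr hx]
  have hnum₀ : 0 ≤ m * cosh m * (sinh x * cosh x - x) :=
    mul_nonneg (mul_nonneg hm (cosh_pos m).le) (sinh_mul_cosh_sub_self_nonneg hx)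
  calc (x + m - x) * excessRate x
      = m * cosh m * (sinh x * cosh x - x) / (cosh m * exp x * cosh x) := by
        rw [excessRate]
        field_simp [(cosh_pos m).ne']
        ring
    _ ≤ ((x + m) * cosh (x + m) * sinh x - x * cosh x * sinh (x + m)) /
          (sinh (x + m) * cosh x) :=
        div_le_div₀ (hnum₀.trans hnum) hnum (by positivity)
          (mul_le_mul_of_nonneg_right hden (cosh_pos x).le)
    _ = (x + m) * cosh (x + m) * sinh x / (sinh (x + m) * cosh x) - x := by
        field_simp [(cosh_pos x).ne']

lemma two_mul_log_cosh_mul_excessRate_le_deriv (hl : l ≠ 0) {x : ℝ} (hx : 0 ≤ x) :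
    2 * (log (cosh l) * excessRate x) ≤ deriv (pythagoreanExcess l) x := by
  rw [(hasDerivAt_pythagoreanExcess hl x).deriv]
  set A := Real.arcosh (cosh l * cosh x)
  have hcoshA : cosh A = cosh l * cosh x := cosh_arcosh (one_lt_cosh_mul_cosh hl x).le
  have hxA : x + log (cosh l) ≤ A := add_log_cosh_le_arcosh hx
  have hkey := sub_mul_excessRate_le hx (by linarith [log_pos (one_lt_cosh.mpr hl)] : x < A)
  have hrw : A * (cosh l * sinh x / sinh A) = A * cosh A * sinh x / (sinh A * cosh x) := by
    rw [hcoshA]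
    field_simp [(cosh_pos x).ne']
  rw [hrw]
  nlinarith [mul_le_mul_of_nonneg_right (by linarith : log (cosh l) ≤ A - x) (excessRate_nonneg hx)]

lemma mul_sub_le_pythagoreanExcess_sub (hl : l ≠ 0) {a C : ℝ} (ha : 0 ≤ a)
    (hC : ∀ x, a ≤ x → C ≤ 2 * (log (cosh l) * excessRate x))
    {x y : ℝ} (hax : a ≤ x) (hxy : x ≤ y) :
    C * (y - x) ≤ pythagoreanExcess l y - pythagoreanExcess l x := by
  have hdiff : Differentiable ℝ (pythagoreanExcess l) :=
    fun z ↦ (hasDerivAt_pythagoreanExcess hl z).differentiableAt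
  refine (convex_Ici a).mul_sub_le_image_sub_of_le_deriv hdiff.continuous.continuousOn
    hdiff.differentiableOn (fun z hz ↦ ?_) x hax y (hax.trans hxy) hxy
  rw [interior_Ici] at hz
  exact (hC z hz.le).trans (two_mul_log_cosh_mul_excessRate_le_deriv hl (ha.trans hz.le))

lemma log_cosh_mul_le_pythagoreanExcess_sub (hl : l ≠ 0) {μ b d : ℝ} (hμ : 0 < μ)
    (hb : 0 ≤ b) (hd : 1 ≤ d) (hbd : b ≤ (1 - μ) * d) :
    log (cosh l) * μ * d / 50 ≤ pythagoreanExcess l d - pythagoreanExcess l b := by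
  have hΛ : 0 ≤ log (cosh l) := log_nonneg (one_le_cosh l)
  have hmono := mul_sub_le_pythagoreanExcess_sub hl le_rfl
    (fun x hx ↦ mul_nonneg zero_le_two (mul_nonneg hΛ (excessRate_nonneg hx)))
    hb (by nlinarith : b ≤ d - μ * d / 2)
  have hgrowth := mul_sub_le_pythagoreanExcess_sub hl (by norm_num : (0 : ℝ) ≤ 1 / 2)
    (C := 2 * (log (cosh l) * (1 / 50)))
    (fun x hx ↦ by
      have := mul_le_mul_of_nonneg_left (one_div_fifty_le_excessRate hx) hΛ
      linarith)
    (by nlinarith : 1 / 2 ≤ d - μ * d / 2) (by nlinarith : d - μ * d / 2 ≤ d)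
  nlinarith

lemma min_half_log_cosh_div_four_pos {l₀ : ℝ} (hl₀ : l₀ ≠ 0) :
    0 < min (1 / 2) (log (cosh l₀) / 4) :=
  lt_min (by norm_num) (div_pos (log_pos (one_lt_cosh.mpr hl₀)) four_pos)

lemma min_mul_add_one_le_log_cosh {l₀ : ℝ} (hl₀ : 0 < l₀) (hl : l₀ ≤ l) :
    min (1 / 2) (log (cosh l₀) / 4) * (l + 1) ≤ log (cosh l) := by
  have hmono : log (cosh l₀) ≤ log (cosh l) := by
    gcongr
    rw [cosh_le_cosh, abs_of_pos hl₀, abs_of_pos (hl₀.trans_le hl)]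
    exact hl
  rcases le_or_gt l 3 with hl3 | hl3
  · have hΛ₀ : 0 ≤ log (cosh l₀) := log_nonneg (one_le_cosh l₀)
    nlinarith [min_le_right (1 / 2 : ℝ) (log (cosh l₀) / 4)]
  · have hexp : l - log 2 ≤ log (cosh l) := by
      have h : exp l / 2 ≤ cosh l := by rw [cosh_eq]; linarith [exp_pos (-l)]
      have := log_le_log (by positivity) h
      rwa [log_div (exp_pos l).ne' two_ne_zero, log_exp] at this
    have := log_two_lt_d9
    nlinarith [min_le_left (1 / 2 : ℝ) (log (cosh l₀) / 4)]

lemma sqrt_le_sub_of_le_sq_sub {X A δ : ℝ} (hδ : 0 ≤ δ) (hδA : δ ≤ A)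
    (h : X ≤ A ^ 2 - 2 * δ * A) : √X ≤ A - δ :=
  (sqrt_le_left (by linarith)).mpr (by nlinarith)

lemma sqrt_arcosh_sq_add_le_arcosh_sub {l₀ μ b d : ℝ} (hl₀ : 0 < l₀) (hl : l₀ ≤ l)
    (hμ : 0 < μ) (hb : 0 ≤ b) (hd : 1 ≤ d) (hbd : b ≤ (1 - μ) * d) :
    √(Real.arcosh (cosh l * cosh b) ^ 2 + (d ^ 2 - b ^ 2)) ≤
      Real.arcosh (cosh l * cosh d) - min (1 / 2) (log (cosh l₀) / 4) * μ / 100 := by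
  set κ := min (1 / 2) (log (cosh l₀) / 4)
  have hκ : 0 < κ := min_half_log_cosh_div_four_pos hl₀.ne'
  have hl0 : 0 < l := hl₀.trans_le hl
  have hgap := log_cosh_mul_le_pythagoreanExcess_sub hl0.ne' hμ hb hd hbd
  have hΛ : κ * (l + 1) ≤ log (cosh l) := min_mul_add_one_le_log_cosh hl₀ hl
  have hA := arcosh_cosh_mul_cosh_le_add hl0.le (by linarith : (0 : ℝ) ≤ d)
  have hδA : κ * μ / 100 ≤ Real.arcosh (cosh l * cosh d) := by
    have hdA := add_log_cosh_le_arcosh (l := l) (by linarith : (0 : ℝ) ≤ d)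
    have hμ₁ : μ ≤ 1 := by nlinarith
    nlinarith [log_nonneg (one_le_cosh l), min_le_left (1 / 2 : ℝ) (log (cosh l₀) / 4)]
  rw [pythagoreanExcess, pythagoreanExcess] at hgap
  refine sqrt_le_sub_of_le_sq_sub (by positivity) hδA ?_
  linarith [mul_le_mul_of_nonneg_right hΛ (by positivity : 0 ≤ μ * d),
    mul_le_mul_of_nonneg_left hA (by positivity : 0 ≤ κ * μ),
    mul_nonneg (mul_nonneg hκ.le hμ.le) (mul_nonneg hl0.le (by linarith : 0 ≤ d - 1))]

end HyperbolicRightTriangle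

theorem uniform_defect_estimate (l₀ α₀ : ℝ) (hl₀ : 0 < l₀) (hα₀ : 0 < α₀)
    (hα₀' : α₀ ≤ Real.pi / 2) :
    ∃ δ₀ > 0, ∀ l α d : ℝ, l₀ ≤ l → α₀ ≤ α → α ≤ Real.pi / 2 → 1 ≤ d →
      δ₀ ≤ arcosh (Real.cosh l * Real.cosh d) -
        Real.sqrt ((arcosh (Real.cosh l * Real.cosh (d * Real.cos α))) ^ 2
          + (d * Real.sin α) ^ 2) := by
  set μ := 1 - Real.cos α₀
  have hμ : 0 < μ := sub_pos.mpr (by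
    simpa using Real.cos_lt_cos_of_nonneg_of_le_pi le_rfl (by linarith [Real.pi_pos]) hα₀)
  have hκ := min_half_log_cosh_div_four_pos hl₀.ne'
  refine ⟨min (1 / 2) (Real.log (Real.cosh l₀) / 4) * μ / 100, by positivity,
    fun l α d hl hα₀α hα hd ↦ ?_⟩
  have hcos : Real.cos α ≤ Real.cos α₀ :=
    Real.cos_le_cos_of_nonneg_of_le_pi hα₀.le (by linarith [Real.pi_pos]) hα₀α
  have hcos₀ : 0 ≤ Real.cos α := Real.cos_nonneg_of_mem_Icc ⟨by linarith, hα⟩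
  have hsin : (d * Real.sin α) ^ 2 = d ^ 2 - (d * Real.cos α) ^ 2 := by
    rw [mul_pow, mul_pow, Real.sin_sq]; ring
  have hdefect := sqrt_arcosh_sq_add_le_arcosh_sub hl₀ hl hμ (mul_nonneg (by linarith) hcos₀) hd
    (by nlinarith : d * Real.cos α ≤ (1 - μ) * d)
  rw [← hsin] at hdefect
  show _ ≤ Real.arcosh _ - √(Real.arcosh _ ^ 2 + _)
  linarith
end
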